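/- arXiv:math/0202022 — 2 statements merged into one kernel-verified Lean document; each statement's English description precedes it below -/
import Mathlib

section
/- Let τ = (s_0, s_h) : O_{P³} ⊕ O_{P³}(−h) → E(k) be a morphism of rank-two vector bundles on P³, where E is a rank-two vector bundle with first Chern class c_1, and s_0 ∈ H^0(E(k)), s_h ∈ H^0(E(k+h)) are sections with zero loci curves C and Γ_h respectively. Then det(τ) is a global section of O_{P³}(c_1 + 2k + h), and its zero surface S = V(det τ) contains both C and Γ_h; moreover the cokernel G of τ satisfies G ≅ I_{C/S}(c_1 + 2k) ⊗ O(−2k) ≅ I_{Γ_h/S}(c_1 + h) up to twist, yielding I_{C/S} ≅ I_{Γ_h/S}(h). -/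
/-!
Write `det(x, p) = x₁p₂ − x₂p₁`. For a (weakly) regular sequence `(p₁, p₂)` and any `q`, the map
`x ↦ det(x, p) mod D`, `D = det(p, q)`, sends `R²` onto the image of `(p₁, p₂)` in `R/(D)`, and its
kernel is spanned by `p` and `q`: if `det(x, p) = c D`, then `x + c q` is an honest syzygy of
`(p₂, −p₁)`, hence a multiple of `p` by exactness of the Koszul complex. Applied to `p = s₀` and to
`p = s_h` (for which `D` only changes sign) this identifies the cokernel of `τ` with both image
ideals; the composite of the two identifications is `R/(D)`-linear since `R → R/(D)` is onto.
-/

open Pointwise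

variable {R : Type*} [CommRing R]

theorem RingTheory.Sequence.IsWeaklyRegular.exists_eq_mul_of_mul_eq_mul {p₁ p₂ : R}
    (hreg : IsWeaklyRegular R [p₁, p₂]) {x y : R} (hxy : x * p₂ = y * p₁) :
    ∃ t, x = t * p₁ ∧ y = t * p₂ := by
  simp only [isWeaklyRegular_cons_iff] at hreg
  obtain ⟨hp₁, hp₂, -⟩ := hreg
  have hx : x ∈ p₁ • (⊤ : Submodule R R) := by
    refine mem_of_isSMulRegular_quotient_of_smul_mem hp₂
      ((Submodule.mem_smul_pointwise_iff_exists _ _ _).mpr ⟨y, trivial, ?_⟩)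
    rw [smul_eq_mul, smul_eq_mul]
    linear_combination -hxy
  obtain ⟨t, -, rfl⟩ := (Submodule.mem_smul_pointwise_iff_exists _ _ _).mp hx
  refine ⟨t, mul_comm _ _, hp₁ ?_⟩
  simp only [smul_eq_mul]
  linear_combination -hxy

noncomputable def detMk (p : R × R) (I : Ideal R) : R × R →ₗ[R] R ⧸ I :=
  I.mkQ ∘ₗ (p.2 • LinearMap.fst R R R - p.1 • LinearMap.snd R R R)

theorem detMk_apply (p : R × R) (I : Ideal R) (x : R × R) :
    detMk p I x = Ideal.Quotient.mk I (x.1 * p.2 - x.2 * p.1) := by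
  simp [detMk, mul_comm, ← Ideal.Quotient.mk_eq_mk]

theorem ker_detMk {p : R × R} (hreg : RingTheory.Sequence.IsWeaklyRegular R [p.1, p.2])
    (q : R × R) :
    LinearMap.ker (detMk p (Ideal.span {p.1 * q.2 - p.2 * q.1})) = Submodule.span R {p, q} := by
  apply le_antisymm
  · intro x hx
    rw [LinearMap.mem_ker, detMk_apply, Ideal.Quotient.eq_zero_iff_mem,
      Ideal.mem_span_singleton'] at hx
    obtain ⟨c, hc⟩ := hx
    obtain ⟨t, ht₁, ht₂⟩ := hreg.exists_eq_mul_of_mul_eq_mul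
      (x := x.1 + c * q.1) (y := x.2 + c * q.2) (by linear_combination -hc)
    rw [Submodule.mem_span_pair]
    refine ⟨t, -c, Prod.ext ?_ ?_⟩
    · simp only [Prod.fst_add, Prod.smul_fst, smul_eq_mul]
      linear_combination -ht₁
    · simp only [Prod.snd_add, Prod.smul_snd, smul_eq_mul]
      linear_combination -ht₂
  · rw [Submodule.span_le]
    rintro x (rfl | rfl) <;>
      rw [SetLike.mem_coe, LinearMap.mem_ker, detMk_apply, Ideal.Quotient.eq_zero_iff_mem]
    · simp [mul_comm]
    · exact Ideal.mem_span_singleton'.mpr ⟨-1, by ring⟩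

theorem range_detMk (p : R × R) (I : Ideal R) :
    LinearMap.range (detMk p I) =
      ((Ideal.span {p.1, p.2}).map (Ideal.Quotient.mk I)).restrictScalars R := by
  rw [Ideal.map_span, Set.image_pair]
  apply le_antisymm
  · rintro _ ⟨x, rfl⟩
    rw [detMk_apply, Submodule.restrictScalars_mem, Ideal.mem_span_pair]
    refine ⟨-Ideal.Quotient.mk I x.2, Ideal.Quotient.mk I x.1, ?_⟩
    simp only [map_sub, map_mul]
    ring
  · intro y hy
    obtain ⟨u, v, rfl⟩ := Ideal.mem_span_pair.mp hy
    obtain ⟨a, rfl⟩ := Ideal.Quotient.mk_surjective u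
    obtain ⟨b, rfl⟩ := Ideal.Quotient.mk_surjective v
    exact ⟨(b, -a), by rw [detMk_apply]; simp only [map_sub, map_mul, map_neg]; ring⟩

noncomputable def quotSpanPairEquiv {p : R × R}
    (hreg : RingTheory.Sequence.IsWeaklyRegular R [p.1, p.2]) (q : R × R) :
    ((R × R) ⧸ Submodule.span R {p, q}) ≃ₗ[R]
      (Ideal.span {p.1, p.2}).map (Ideal.Quotient.mk (Ideal.span {p.1 * q.2 - p.2 * q.1})) :=
  (Submodule.quotEquivOfEq _ _ (ker_detMk hreg q).symm).trans <|
    (LinearMap.quotKerEquivRange _).trans <|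
      (LinearEquiv.ofEq _ _ (range_detMk p _)).trans <|
        (Submodule.restrictScalarsEquiv R _ _ _).restrictScalars R

/-- Let `τ = (s₀, s_h) : O_{ℙ³} ⊕ O_{ℙ³}(−h) → E(k)` be a
morphism of rank-two bundles on `ℙ³`, with `E` of first Chern class `c₁`, and
`s₀ ∈ H⁰(E(k))`, `s_h ∈ H⁰(E(k+h))` sections with zero loci the curves `C`, `Γ_h`.
Then `det τ ∈ H⁰(O_{ℙ³}(c₁+2k+h))`, the surface `S = V(det τ)` contains both `C`
and `Γ_h`, and the cokernel `G` of `τ` satisfies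
`G ≅ I_{C/S}(c₁+2k) ≅ I_{Γ_h/S}(c₁+h)` up to twist, whence `I_{C/S} ≅ I_{Γ_h/S}(h)`.

We formalize this on the homogeneous coordinate ring `R = ℂ[x₀,…,x₃]`, writing the
two sections in components in a trivialization of `E(k)` (`s₀ = (f₁, f₂)` with `fᵢ`
homogeneous of degree `dᵢ`, `d₁ + d₂ = c₁ + 2k`; `s_h = (g₁, g₂)` with `gᵢ`
homogeneous of degree `dᵢ + h`), with each section having codimension-two zero
locus (a regular sequence, the Koszul condition).  Then, with
`D := det τ = f₁g₂ − f₂g₁` and `S = R/(D)`: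
* `D` is homogeneous of degree `c₁ + 2k + h` (i.e. a degree `c₁+2k+h` surface);
* `D ∈ (f₁, f₂) = I_C` and `D ∈ (g₁, g₂) = I_{Γ_h}` (`S` contains `C` and `Γ_h`);
* the cokernel `G = (R ⊕ R)/⟨s₀, s_h⟩` of `τ` is isomorphic to the image ideal
  `I_{C/S}` of `I_C` in `R/(D)` as well as to `I_{Γ_h/S}`, hence
  `I_{C/S} ≅ I_{Γ_h/S}` (an isomorphism which, keeping track of the grading, is a
  twist by `h`: `I_{C/S} ≅ I_{Γ_h/S}(h)`, the elementary biliaison relation). -/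
theorem stmt18
    (c1 k h d1 d2 : ℕ) (hd : d1 + d2 = c1 + 2 * k)
    (f1 f2 g1 g2 : MvPolynomial (Fin 4) ℂ)
    (hf1 : f1.IsHomogeneous d1) (hf2 : f2.IsHomogeneous d2)
    (hg1 : g1.IsHomogeneous (d1 + h)) (hg2 : g2.IsHomogeneous (d2 + h))
    -- C = V(s₀) and Γ_h = V(s_h) have codimension two (Koszul condition):
    (hregC : RingTheory.Sequence.IsRegular (MvPolynomial (Fin 4) ℂ) [f1, f2])
    (hregΓ : RingTheory.Sequence.IsRegular (MvPolynomial (Fin 4) ℂ) [g1, g2]) :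
    -- det τ is a global section of O(c₁ + 2k + h):
    (f1 * g2 - f2 * g1).IsHomogeneous (c1 + 2 * k + h)
    -- S = V(det τ) contains C and Γ_h:
    ∧ f1 * g2 - f2 * g1 ∈ Ideal.span {f1, f2}
    ∧ f1 * g2 - f2 * g1 ∈ Ideal.span {g1, g2}
    -- G = coker τ ≅ I_{C/S} ≅ I_{Γ_h/S}, hence I_{C/S} ≅ I_{Γ_h/S}(h):
    ∧ Nonempty
        (((MvPolynomial (Fin 4) ℂ × MvPolynomial (Fin 4) ℂ) ⧸
            Submodule.span (MvPolynomial (Fin 4) ℂ) {(f1, f2), (g1, g2)}) ≃+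
          ((Ideal.span {f1, f2}).map
            (Ideal.Quotient.mk (Ideal.span {f1 * g2 - f2 * g1}))))
    ∧ Nonempty
        (((MvPolynomial (Fin 4) ℂ × MvPolynomial (Fin 4) ℂ) ⧸
            Submodule.span (MvPolynomial (Fin 4) ℂ) {(f1, f2), (g1, g2)}) ≃+
          ((Ideal.span {g1, g2}).map
            (Ideal.Quotient.mk (Ideal.span {f1 * g2 - f2 * g1}))))
    ∧ Nonempty
        (((Ideal.span {f1, f2}).map
            (Ideal.Quotient.mk (Ideal.span {f1 * g2 - f2 * g1}))) ≃ₗ[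
          MvPolynomial (Fin 4) ℂ ⧸ Ideal.span {f1 * g2 - f2 * g1}]
          ((Ideal.span {g1, g2}).map
            (Ideal.Quotient.mk (Ideal.span {f1 * g2 - f2 * g1})))) := by
  have hdet : Ideal.span {g1 * f2 - g2 * f1} = Ideal.span {f1 * g2 - f2 * g1} := by
    rw [← Ideal.span_singleton_neg]
    ring_nf
  have eC := quotSpanPairEquiv (p := (f1, f2)) hregC.toIsWeaklyRegular (g1, g2)
  have eΓ : ((MvPolynomial (Fin 4) ℂ × MvPolynomial (Fin 4) ℂ) ⧸
      Submodule.span (MvPolynomial (Fin 4) ℂ) {(f1, f2), (g1, g2)}) ≃ₗ[MvPolynomial (Fin 4) ℂ]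
        (Ideal.span {g1, g2}).map (Ideal.Quotient.mk (Ideal.span {f1 * g2 - f2 * g1})) := by
    rw [Set.pair_comm, ← hdet]
    exact quotSpanPairEquiv (p := (g1, g2)) hregΓ.toIsWeaklyRegular (f1, f2)
  refine ⟨?_, Ideal.mem_span_pair.mpr ⟨g2, -g1, by ring⟩,
    Ideal.mem_span_pair.mpr ⟨-f2, f1, by ring⟩, ⟨eC.toAddEquiv⟩, ⟨eΓ.toAddEquiv⟩,
    ⟨LinearEquiv.extendScalarsOfSurjective Ideal.Quotient.mk_surjective (eC.symm.trans eΓ)⟩⟩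
  have hdeg₁ : d1 + (d2 + h) = c1 + 2 * k + h := by omega
  have hdeg₂ : d2 + (d1 + h) = c1 + 2 * k + h := by omega
  exact (hdeg₁ ▸ hf1.mul hg2).sub (hdeg₂ ▸ hf2.mul hg1)
end

section
/- Let X be a smooth projective threefold with ω_X ≅ O_X(−m) for some m ≥ 0, embedded by a very ample O_X(1), and let Σ be a finite set of points. Let b : Y → X be the blow-up along Σ with exceptional divisor B = ΣE_i, and suppose the multiple-point Seshadri constant ε̄ = ε(O_X(1); Σ) satisfies ε̄ > 3/(k+m). Then the ℝ-divisor (k+m)b*H − 3B is big and nef on Y, and consequently H¹(X, I_{Σ/X}(k)) = 0. -/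
/-!
Split `(k+m)·b*H − 3B = (3/ε)·(b*H − ε·B) + (k+m − 3/ε)·b*H`: the first summand is a nonnegative
multiple of the nef Seshadri class, the second a positive multiple of the big and nef class `b*H`,
so the sum is nef, and big as a big class plus a nef one. Kawamata–Viehweg vanishing and the Leray
isomorphism then kill `H¹(X, I_{Σ/X}(k))`.
-/

lemma smul_sub_smul_eq_div_smul_add {N : Type*} [AddCommGroup N] [Module ℝ N]
    {ε : ℝ} (hε : ε ≠ 0) (c a : ℝ) (x y : N) :
    c • x - a • y = (a / ε) • (x - ε • y) + (c - a / ε) • x := by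
  rw [smul_sub, smul_smul, sub_smul, div_mul_cancel₀ _ hε]
  abel

section SeshadriSplitting

variable {N : Type*} [AddCommGroup N] [Module ℝ N] {Nef Big : N → Prop}
  {x y : N} {ε a c : ℝ}

lemma nef_smul_sub_smul_of_nef_sub_smul
    (hnef_add : ∀ D D' : N, Nef D → Nef D' → Nef (D + D'))
    (hnef_smul : ∀ (c : ℝ) (D : N), 0 ≤ c → Nef D → Nef (c • D))
    (hx : Nef x) (hxy : Nef (x - ε • y)) (hε : 0 < ε) (ha : 0 ≤ a) (hc : a / ε < c) :
    Nef (c • x - a • y) := by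
  rw [smul_sub_smul_eq_div_smul_add hε.ne']
  exact hnef_add _ _ (hnef_smul _ _ (by positivity) hxy)
    (hnef_smul _ _ (sub_pos.mpr hc).le hx)

lemma big_smul_sub_smul_of_nef_sub_smul
    (hnef_smul : ∀ (c : ℝ) (D : N), 0 ≤ c → Nef D → Nef (c • D))
    (hbig_smul : ∀ (c : ℝ) (D : N), 0 < c → Big D → Big (c • D))
    (hbig_add_nef : ∀ D D' : N, Big D → Nef D' → Big (D + D'))
    (hx : Big x) (hxy : Nef (x - ε • y)) (hε : 0 < ε) (ha : 0 ≤ a) (hc : a / ε < c) :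
    Big (c • x - a • y) := by
  rw [smul_sub_smul_eq_div_smul_add hε.ne', add_comm]
  exact hbig_add_nef _ _ (hbig_smul _ _ (sub_pos.mpr hc) hx)
    (hnef_smul _ _ (by positivity) hxy)

end SeshadriSplitting

theorem stmt19_general
    (N : Type*) [AddCommGroup N] [Module ℝ N]            -- N¹(Y)_ℝ
    (Nef Big : N → Prop)
    (hnef_add : ∀ D D' : N, Nef D → Nef D' → Nef (D + D'))
    (hnef_smul : ∀ (c : ℝ) (D : N), 0 ≤ c → Nef D → Nef (c • D))
    (hbig_smul : ∀ (c : ℝ) (D : N), 0 < c → Big D → Big (c • D))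
    (hbig_add_nef : ∀ D D' : N, Big D → Nef D' → Big (D + D'))
    (bH B : N)                                           -- classes of b*H and B = ΣEᵢ
    (hHbig : Big bH) (hHnef : Nef bH)                    -- H very ample, b birational
    (k m : ℤ)
    (ε : ℝ) (hεpos : 0 < ε)
    (hSesh : Nef (bH - ε • B))                           -- ε̄ = ε(O_X(1); Σ)
    (hkm : 3 / ε < ((k + m : ℤ) : ℝ))                    -- ε̄ > 3/(k+m)
    (H1 : N → Type*)     -- D ↦ H¹(Y, ω_Y ⊗ O_Y(⌈D⌉))
    (hKV : ∀ D : N, Nef D → Big D → Subsingleton (H1 D)) -- Kawamata–Viehweg vanishing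
    (H1ISig : Type*)                                       -- H¹(X, I_{Σ/X}(k))
    (hLeray : Subsingleton (H1 (((k + m : ℤ) : ℝ) • bH - (3 : ℝ) • B)) →
      Subsingleton H1ISig) :
    (Nef (((k + m : ℤ) : ℝ) • bH - (3 : ℝ) • B)
      ∧ Big (((k + m : ℤ) : ℝ) • bH - (3 : ℝ) • B))
    ∧ Subsingleton H1ISig := by
  have hnef := nef_smul_sub_smul_of_nef_sub_smul hnef_add hnef_smul hHnef hSesh hεpos
    zero_le_three hkm
  have hbig := big_smul_sub_smul_of_nef_sub_smul hnef_smul hbig_smul hbig_add_nef hHbig hSesh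
    hεpos zero_le_three hkm
  exact ⟨⟨hnef, hbig⟩, hLeray (hKV _ hnef hbig)⟩

/-- Let `X` be a smooth projective threefold with
`ω_X ≅ O_X(−m)`, `m ≥ 0`, embedded by a very ample `O_X(1)` with hyperplane class
`H`, and let `Σ` be a finite set of points.  Let `b : Y → X` be the blow-up along
`Σ` with exceptional divisor `B = Σᵢ Eᵢ`, and suppose the multiple-point Seshadri
constant `ε̄ = ε(O_X(1); Σ)` satisfies `ε̄ > 3/(k+m)`.  Then the ℝ-divisor
`(k+m)·b*H − 3B` is big and nef on `Y`, and consequently `H¹(X, I_{Σ/X}(k)) = 0`.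

We work in the real Néron–Severi space `N = N¹(Y)_ℝ`, with abstract predicates
`Nef`, `Big` satisfying the standard formal properties (nef cone is a convex cone;
big+nef is stable under adding a nef class and positive scaling; `b*H` is big and
nef since `H` is very ample and `b` is birational).  The Seshadri hypothesis is
encoded by nefness of `b*H − ε̄·B`.  The cohomological consequence is encoded by
the Kawamata–Viehweg vanishing theorem (for every big and nef `D`,
`H¹(Y, ω_Y ⊗ O_Y(⌈D⌉)) = 0`) together with the Leray isomorphism
`H¹(X, I_{Σ/X}(k)) ≅ H¹(Y, ω_Y ⊗ O_Y((k+m)b*H − 3B))`. -/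
theorem stmt19
    (N : Type*) [AddCommGroup N] [Module ℝ N]            -- N¹(Y)_ℝ
    (Nef Big : N → Prop)
    (hnef_add : ∀ D D' : N, Nef D → Nef D' → Nef (D + D'))
    (hnef_smul : ∀ (c : ℝ) (D : N), 0 ≤ c → Nef D → Nef (c • D))
    (hbig_smul : ∀ (c : ℝ) (D : N), 0 < c → Big D → Big (c • D))
    (hbig_add_nef : ∀ D D' : N, Big D → Nef D' → Big (D + D'))
    (bH B : N)                                           -- classes of b*H and B = ΣEᵢ
    (hHbig : Big bH) (hHnef : Nef bH)                    -- H very ample, b birational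
    (k m : ℤ) (hm : 0 ≤ m)
    (ε : ℝ) (hεpos : 0 < ε)
    (hSesh : Nef (bH - ε • B))                           -- ε̄ = ε(O_X(1); Σ)
    (hkm : 3 / ε < ((k + m : ℤ) : ℝ))                    -- ε̄ > 3/(k+m)
    (H1 : N → Type*)     -- D ↦ H¹(Y, ω_Y ⊗ O_Y(⌈D⌉))
    (hKV : ∀ D : N, Nef D → Big D → Subsingleton (H1 D)) -- Kawamata–Viehweg vanishing
    (H1ISig : Type*)                                       -- H¹(X, I_{Σ/X}(k))
    (hLeray : Subsingleton (H1 (((k + m : ℤ) : ℝ) • bH - (3 : ℝ) • B)) →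
      Subsingleton H1ISig) :
    (Nef (((k + m : ℤ) : ℝ) • bH - (3 : ℝ) • B)
      ∧ Big (((k + m : ℤ) : ℝ) • bH - (3 : ℝ) • B))
    ∧ Subsingleton H1ISig :=
  stmt19_general N Nef Big hnef_add hnef_smul hbig_smul hbig_add_nef bH B hHbig hHnef k m ε hεpos
    hSesh hkm H1 hKV H1ISig hLeray
end
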